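/- Let z ≥ 2 be real and let k be a positive integer with k ≤ (1/2)·log z. Then the infinite product over primes p > z of (1 − 2k/p)·(1 − 1/p)^{−2k} is bounded below by exp(−C·(log z)²/z) for some absolute constant C > 0, and bounded above by 1. -/

import Mathlib

/-!
With `n = 2k`, Bernoulli's inequality `(1 - 1/p)^n ≥ 1 - n/p` gives each factor `≤ 1`, while
the second-order bound `(1 - 1/p)^n ≤ 1 - n/p + (n/p)²/2` gives each factor `≥ 1 - (n/p)²`,
hence logarithm `≥ -2 (n/p)²` as soon as `n ≤ p/2` (true for `p > z`, since `n ≤ log z ≤ z/2`).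
So the logarithms are summable, the product is the exponential of their sum, and
`∑_{p > z} p⁻² ≤ 2/z` yields the lower bound with `C = 4`.
-/

open Real

lemma one_sub_pow_le_one_sub_mul_add_sq (n : ℕ) {b : ℝ} (hb0 : 0 ≤ b) (hb1 : b ≤ 1) :
    (1 - b) ^ n ≤ 1 - n * b + (n * b) ^ 2 / 2 := by
  induction n with
  | zero => simp
  | succ n ih =>
    calc (1 - b) ^ (n + 1) = (1 - b) ^ n * (1 - b) := pow_succ _ _
      _ ≤ (1 - n * b + (n * b) ^ 2 / 2) * (1 - b) := by gcongr
      _ ≤ 1 - (n + 1 : ℕ) * b + ((n + 1 : ℕ) * b) ^ 2 / 2 := by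
        push_cast
        nlinarith [mul_nonneg (sq_nonneg ((n : ℝ) * b)) hb0, sq_nonneg b]

lemma log_le_half_self {z : ℝ} (hz : 0 < z) : log z ≤ z / 2 := by
  have h := log_le_sub_one_of_pos (half_pos hz)
  rw [log_div hz.ne' two_ne_zero] at h
  linarith [log_two_lt_d9]

lemma neg_two_mul_le_log_one_sub {t : ℝ} (ht0 : 0 ≤ t) (ht : t ≤ 1 / 2) :
    -2 * t ≤ log (1 - t) := by
  have hinv : (1 - t)⁻¹ ≤ 1 + 2 * t := by
    rw [inv_le_iff_one_le_mul₀ (by linarith)]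
    nlinarith
  calc -2 * t ≤ 1 - (1 - t)⁻¹ := by linarith
    _ ≤ log (1 - t) := one_sub_inv_le_log_of_pos (by linarith)

section LocalFactor

noncomputable def localFactor (n : ℕ) (P : ℝ) : ℝ := (1 - n / P) * ((1 - 1 / P) ^ n)⁻¹

variable {n : ℕ} {P : ℝ}

lemma localFactor_le_one (hP : 1 < P) :
    localFactor n P ≤ 1 := by
  have hP0 : 0 < P := by linarith
  have hpos : 0 < (1 - 1 / P) ^ n := pow_pos (by rw [sub_pos, div_lt_one hP0]; exact hP) n
  rw [localFactor, mul_inv_le_iff₀ hpos, one_mul]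
  have hinv : 1 / P ≤ 2 := by rw [div_le_iff₀ hP0]; linarith
  convert one_add_mul_le_pow (a := -(1 / P)) (by linarith) n using 1 <;> ring

lemma div_sq_le_one_fourth (hP : 1 < P) (hnP : 2 * n ≤ P) : ((n : ℝ) / P) ^ 2 ≤ 1 / 4 := by
  have ha0 : 0 ≤ (n : ℝ) / P := by positivity
  have ha1 : (n : ℝ) / P ≤ 1 / 2 := by rw [div_le_iff₀ (by linarith)]; linarith
  nlinarith

lemma one_sub_sq_le_localFactor (hP : 1 < P) (hnP : 2 * n ≤ P) :
    1 - (n / P) ^ 2 ≤ localFactor n P := by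
  have hP0 : 0 < P := by linarith
  have hpos : 0 < (1 - 1 / P) ^ n := pow_pos (by rw [sub_pos, div_lt_one hP0]; exact hP) n
  have hbinom := one_sub_pow_le_one_sub_mul_add_sq n (b := 1 / P) (by positivity)
    (by rw [div_le_one hP0]; exact hP.le)
  rw [mul_one_div] at hbinom
  rw [localFactor, ← div_eq_mul_inv, le_div_iff₀ hpos]
  calc (1 - (n / P) ^ 2) * (1 - 1 / P) ^ n
      ≤ (1 - (n / P) ^ 2) * (1 - n / P + (n / P) ^ 2 / 2) := by
        gcongr
        linarith [div_sq_le_one_fourth hP hnP]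
    _ ≤ 1 - n / P := by nlinarith [sq_nonneg ((n : ℝ) / P * (1 - n / P))]

lemma localFactor_pos (hP : 1 < P) (hnP : 2 * n ≤ P) : 0 < localFactor n P :=
  lt_of_lt_of_le (by linarith [div_sq_le_one_fourth hP hnP]) (one_sub_sq_le_localFactor hP hnP)

lemma neg_two_mul_sq_le_log_localFactor (hP : 1 < P) (hnP : 2 * n ≤ P) :
    -2 * (n / P) ^ 2 ≤ log (localFactor n P) :=
  (neg_two_mul_le_log_one_sub (by positivity) (by linarith [div_sq_le_one_fourth hP hnP])).trans
    (log_le_log (by linarith [div_sq_le_one_fourth hP hnP]) (one_sub_sq_le_localFactor hP hnP))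

end LocalFactor

lemma tsum_inv_sq_le_of_forall_lt {z : ℝ} (hz : 0 < z) (q : ℕ → Prop)
    (hq : ∀ n, q n → z < n) : ∑' n : {n // q n}, ((n : ℝ) ^ 2)⁻¹ ≤ 2 / z := by
  refine ((summable_nat_pow_inv.mpr one_lt_two).subtype _).tsum_le_of_sum_le fun t => ?_
  set m := ⌊z⌋₊
  set N := (t.map (Function.Embedding.subtype _)).sup id + 1
  have hsub : t.map (Function.Embedding.subtype _) ⊆ Finset.Ioo m N := by
    intro n hn
    rw [Finset.mem_Ioo]
    refine ⟨?_, Nat.lt_succ_of_le (Finset.le_sup (f := id) hn)⟩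
    obtain ⟨q, -, rfl⟩ := Finset.mem_map.mp hn
    exact (Nat.floor_lt hz.le).mpr (hq _ q.2)
  calc ∑ n ∈ t, ((n : ℝ) ^ 2)⁻¹
      = ∑ n ∈ t.map (Function.Embedding.subtype _), ((n : ℝ) ^ 2)⁻¹ := by rw [Finset.sum_map]; rfl
    _ ≤ ∑ n ∈ Finset.Ioo m N, ((n : ℝ) ^ 2)⁻¹ :=
        Finset.sum_le_sum_of_subset_of_nonneg hsub fun _ _ _ => by positivity
    _ ≤ 2 / (m + 1) := sum_Ioo_inv_sq_le m N
    _ ≤ 2 / z := by gcongr; exact (Nat.lt_floor_add_one z).le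

/-- For `z ≥ 2` and a positive integer `k ≤ (1/2) log z`, the product over
primes `p > z` of `(1 - 2k/p)(1 - 1/p)^{-2k}` is bounded below by `exp(-C (log z)²/z)` for
an absolute constant `C > 0`, and bounded above by `1`. -/
theorem stmt_10 :
    ∃ C : ℝ, 0 < C ∧ ∀ (z : ℝ) (k : ℕ), 2 ≤ z → 1 ≤ k → (k : ℝ) ≤ Real.log z / 2 →
      Real.exp (-C * (Real.log z) ^ 2 / z) ≤
        (∏' p : {p : ℕ // p.Prime ∧ z < (p : ℝ)},
          (1 - 2 * (k : ℝ) / (p : ℕ)) * ((1 : ℝ) - 1 / (p : ℕ)) ^ (-(2 * k : ℤ))) ∧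
      (∏' p : {p : ℕ // p.Prime ∧ z < (p : ℝ)},
          (1 - 2 * (k : ℝ) / (p : ℕ)) * ((1 : ℝ) - 1 / (p : ℕ)) ^ (-(2 * k : ℤ))) ≤ 1 := by
  refine ⟨4, four_pos, fun z k hz _ hkz => ?_⟩
  have hfactor : ∀ P : ℝ, (1 - 2 * (k : ℝ) / P) * (1 - 1 / P) ^ (-(2 * k : ℤ)) =
      localFactor (2 * k) P := fun P => by
    rw [localFactor, zpow_neg, show (2 * k : ℤ) = ((2 * k : ℕ) : ℤ) by push_cast; rfl,
      zpow_natCast]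
    push_cast; rfl
  simp only [hfactor]
  have hz0 : 0 < z := by linarith
  have hP : ∀ p : {p : ℕ // p.Prime ∧ z < (p : ℝ)},
      1 < ((p : ℕ) : ℝ) ∧ 2 * ((2 * k : ℕ) : ℝ) ≤ (p : ℕ) := fun p =>
    ⟨mod_cast p.2.1.one_lt, by push_cast; linarith [log_le_half_self hz0, p.2.2]⟩
  have hlower : ∀ p : {p : ℕ // p.Prime ∧ z < (p : ℝ)},
      -(2 * log z ^ 2) * (((p : ℕ) : ℝ) ^ 2)⁻¹ ≤ log (localFactor (2 * k) (p : ℕ)) := fun p => by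
    refine le_trans ?_ (neg_two_mul_sq_le_log_localFactor (hP p).1 (hP p).2)
    rw [div_pow, div_eq_mul_inv, neg_mul, neg_mul, ← mul_assoc, neg_le_neg_iff]
    gcongr
    push_cast; linarith
  have hupper : ∀ p : {p : ℕ // p.Prime ∧ z < (p : ℝ)}, log (localFactor (2 * k) (p : ℕ)) ≤ 0 :=
    fun p => log_nonpos (localFactor_pos (hP p).1 (hP p).2).le (localFactor_le_one (hP p).1)
  have hsummable_inv_sq :
      Summable fun p : {p : ℕ // p.Prime ∧ z < (p : ℝ)} => (((p : ℕ) : ℝ) ^ 2)⁻¹ :=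
    (summable_nat_pow_inv.mpr one_lt_two).subtype _
  have hsummable : Summable fun p : {p : ℕ // p.Prime ∧ z < (p : ℝ)} =>
      log (localFactor (2 * k) (p : ℕ)) :=
    (hsummable_inv_sq.mul_left (2 * log z ^ 2)).of_norm_bounded fun p => by
      rw [Real.norm_eq_abs, abs_of_nonpos (hupper p)]
      linarith [hlower p]
  rw [← rexp_tsum_eq_tprod (fun p => localFactor_pos (hP p).1 (hP p).2) hsummable]
  refine ⟨exp_le_exp.mpr ?_, exp_le_one_iff.mpr (tsum_nonpos hupper)⟩
  calc -4 * log z ^ 2 / z = -(2 * log z ^ 2) * (2 / z) := by ring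
    _ ≤ -(2 * log z ^ 2) * ∑' p : {p : ℕ // p.Prime ∧ z < (p : ℝ)}, (((p : ℕ) : ℝ) ^ 2)⁻¹ :=
        mul_le_mul_of_nonpos_left (tsum_inv_sq_le_of_forall_lt hz0 _ fun _ hp => hp.2)
          (by nlinarith [sq_nonneg (log z)])
    _ = ∑' p : {p : ℕ // p.Prime ∧ z < (p : ℝ)}, -(2 * log z ^ 2) * (((p : ℕ) : ℝ) ^ 2)⁻¹ :=
        tsum_mul_left.symm
    _ ≤ _ := (hsummable_inv_sq.mul_left _).tsum_le_tsum hlower hsummable
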